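/- Static cell-usage bound: for any core Simplicity expression t : A ⊢ B and value v : A, during the execution of ⟪t⟫ from the standard initial state, the total number of cells in both stacks never exceeds cellBnd(t) := bitSize(A) + bitSize(B) + extraCellBnd(t). -/

import Mathlib

inductive Ty : Type
  | unit : Ty
  | sum : Ty → Ty → Ty
  | prod : Ty → Ty → Ty

def Ty.interp : Ty → Type
  | .unit => Unit
  | .sum a b => Sum a.interp b.interp
  | .prod a b => a.interp × b.interp

inductive Term : Ty → Ty → Type
  | iden {A : Ty} : Term A A
  | comp {A B C : Ty} : Term A B → Term B C → Term A C
  | unit {A : Ty} : Term A .unit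
  | injl {A B C : Ty} : Term A B → Term A (.sum B C)
  | injr {A B C : Ty} : Term A C → Term A (.sum B C)
  | case {A B C D : Ty} : Term (.prod A C) D → Term (.prod B C) D →
      Term (.prod (.sum A B) C) D
  | pair {A B C : Ty} : Term A B → Term A C → Term A (.prod B C)
  | take {A B C : Ty} : Term A C → Term (.prod A B) C
  | drop {A B C : Ty} : Term B C → Term (.prod A B) C

def Term.eval : {A B : Ty} → Term A B → A.interp → B.interp
  | _, _, .iden, a => a
  | _, _, .comp s t, a => t.eval (s.eval a)
  | _, _, .unit, _ => ()
  | _, _, .injl t, a => Sum.inl (t.eval a)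
  | _, _, .injr t, a => Sum.inr (t.eval a)
  | _, _, .case s t, x =>
      match x with
      | (Sum.inl a, c) => s.eval (a, c)
      | (Sum.inr b, c) => t.eval (b, c)
  | _, _, .pair s t, a => (s.eval a, t.eval a)
  | _, _, .take t, x => t.eval x.1
  | _, _, .drop t, x => t.eval x.2
def Ty.bitSize : Ty → ℕ
  | .unit => 0
  | .sum a b => 1 + max a.bitSize b.bitSize
  | .prod a b => a.bitSize + b.bitSize

def padl (a b : Ty) : ℕ := max a.bitSize b.bitSize - a.bitSize
def padr (a b : Ty) : ℕ := max a.bitSize b.bitSize - b.bitSize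

abbrev Cell := Option Bool

def Ty.encode : (A : Ty) → A.interp → List Cell
  | .unit, _ => []
  | .sum a b, Sum.inl x => (some false :: List.replicate (padl a b) none) ++ a.encode x
  | .sum a b, Sum.inr y => (some true :: List.replicate (padr a b) none) ++ b.encode y
  | .prod a b, x => a.encode x.1 ++ b.encode x.2
/-- A frame of the Bit Machine: an array of cells together with a cursor. -/
structure Frame where
  cells : List Cell
  cursor : ℕ

/-- A state of the Bit Machine: a stack of read frames and a stack of write
frames (the head of each list is the active frame). -/
structure MState where
  readStack : List Frame
  writeStack : List Frame

/-- Total number of cells in both stacks. -/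
def MState.cellCount (s : MState) : ℕ :=
  (s.readStack.map fun f => f.cells.length).sum +
    (s.writeStack.map fun f => f.cells.length).sum

def nopI (s : MState) : Option MState := some s

def writeI (b : Bool) (s : MState) : Option MState :=
  match s.writeStack with
  | [] => none
  | w :: ws =>
    if w.cells[w.cursor]? = some none then
      some { s with writeStack := ⟨w.cells.set w.cursor (some b), w.cursor + 1⟩ :: ws }
    else none

def copyI (n : ℕ) (s : MState) : Option MState :=
  match s.readStack, s.writeStack with
  | r :: _, w :: ws =>
    if r.cursor + n ≤ r.cells.length ∧ w.cursor + n ≤ w.cells.length ∧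
        ((w.cells.drop w.cursor).take n).all Option.isNone then
      some { s with writeStack :=
        ⟨w.cells.take w.cursor ++ (r.cells.drop r.cursor).take n ++
            w.cells.drop (w.cursor + n),
          w.cursor + n⟩ :: ws }
    else none
  | _, _ => none

def skipI (n : ℕ) (s : MState) : Option MState :=
  match s.writeStack with
  | [] => none
  | w :: ws =>
    if w.cursor + n ≤ w.cells.length then
      some { s with writeStack := ⟨w.cells, w.cursor + n⟩ :: ws }
    else none

def fwdI (n : ℕ) (s : MState) : Option MState :=
  match s.readStack with
  | [] => none
  | r :: rs =>
    if r.cursor + n ≤ r.cells.length then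
      some { s with readStack := ⟨r.cells, r.cursor + n⟩ :: rs }
    else none

def bwdI (n : ℕ) (s : MState) : Option MState :=
  match s.readStack with
  | [] => none
  | r :: rs =>
    if n ≤ r.cursor then
      some { s with readStack := ⟨r.cells, r.cursor - n⟩ :: rs }
    else none

def newFrameI (n : ℕ) (s : MState) : Option MState :=
  some { s with writeStack := ⟨List.replicate n none, 0⟩ :: s.writeStack }

def moveFrameI (s : MState) : Option MState :=
  match s.writeStack with
  | w :: w' :: ws =>
    some { readStack := ⟨w.cells, 0⟩ :: s.readStack, writeStack := w' :: ws }
  | _ => none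

def dropFrameI (s : MState) : Option MState :=
  match s.readStack with
  | _ :: r :: rs => some { s with readStack := r :: rs }
  | _ => none

/-- The `read` instruction: returns the bit under the active read frame's
cursor, crashing on an undefined cell or an out-of-range cursor. -/
def readI (s : MState) : Option Bool :=
  match s.readStack with
  | r :: _ =>
    match r.cells[r.cursor]? with
    | some (some b) => some b
    | _ => none
  | [] => none

/-- A run of the machine: from a state, either crash, or produce the final
state together with the maximum of `MState.cellCount` over all states
encountered during execution (including the initial and final ones). -/
abbrev Run := MState → Option (MState × ℕ)

def instr (f : MState → Option MState) : Run := fun s =>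
  (f s).map fun s' => (s', max s.cellCount s'.cellCount)

def seqRun (p q : Run) : Run := fun s => do
  let (s₁, n₁) ← p s
  let (s₂, n₂) ← q s₁
  pure (s₂, max n₁ n₂)

/-- Translation of core Simplicity to the Bit Machine: `runCore t` is the
state transformation (with cell-usage tracking) of executing `⟪t⟫`. -/
def runCore : {A B : Ty} → Term A B → Run
  | A, _, .iden => instr (copyI A.bitSize)
  | _, _, @Term.comp _ B _ s t =>
      seqRun (instr (newFrameI B.bitSize))
        (seqRun (runCore s)
          (seqRun (instr moveFrameI)
            (seqRun (runCore t) (instr dropFrameI))))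
  | _, _, .unit => instr nopI
  | _, _, @Term.injl _ B C t =>
      seqRun (instr (writeI false)) (seqRun (instr (skipI (padl B C))) (runCore t))
  | _, _, @Term.injr _ B C t =>
      seqRun (instr (writeI true)) (seqRun (instr (skipI (padr B C))) (runCore t))
  | _, _, @Term.case A B _ _ s t => fun st =>
      match readI st with
      | some false =>
          seqRun (instr (fwdI (1 + padl A B)))
            (seqRun (runCore s) (instr (bwdI (1 + padl A B)))) st
      | some true =>
          seqRun (instr (fwdI (1 + padr A B)))
            (seqRun (runCore t) (instr (bwdI (1 + padr A B)))) st
      | none => none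
  | _, _, .pair s t => seqRun (runCore s) (runCore t)
  | _, _, .take t => runCore t
  | _, _, @Term.drop A _ _ t =>
      seqRun (instr (fwdI A.bitSize)) (seqRun (runCore t) (instr (bwdI A.bitSize)))

/-- The standard initial state for evaluating `t : A ⊢ B` on input `v`. -/
def initState (A B : Ty) (v : A.interp) : MState :=
  { readStack := [⟨A.encode v, 0⟩],
    writeStack := [⟨List.replicate B.bitSize none, 0⟩] }

/-- The expected final state after evaluating `t : A ⊢ B` on input `v`
with output `w`. -/
def finalState (A B : Ty) (v : A.interp) (w : B.interp) : MState :=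
  { readStack := [⟨A.encode v, 0⟩],
    writeStack := [⟨B.encode w, B.bitSize⟩] }

def extraCellBnd : {A B : Ty} → Term A B → ℕ
  | _, _, .iden => 0
  | _, _, @Term.comp _ B _ s t => B.bitSize + max (extraCellBnd s) (extraCellBnd t)
  | _, _, .unit => 0
  | _, _, .injl t => extraCellBnd t
  | _, _, .injr t => extraCellBnd t
  | _, _, .case s t => max (extraCellBnd s) (extraCellBnd t)
  | _, _, .pair s t => max (extraCellBnd s) (extraCellBnd t)
  | _, _, .take t => extraCellBnd t
  | _, _, .drop t => extraCellBnd t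

def cellBnd {A B : Ty} (t : Term A B) : ℕ :=
  A.bitSize + B.bitSize + extraCellBnd t

/-! ### Auxiliary development -/

def rl (s : MState) : List ℕ := s.readStack.map fun f => f.cells.length
def wl (s : MState) : List ℕ := s.writeStack.map fun f => f.cells.length

lemma cellCount_def (s : MState) : s.cellCount = (rl s).sum + (wl s).sum := rfl

lemma instr_spec {f : MState → Option MState} {st s : MState} {n : ℕ}
    (h : instr f st = some (s, n)) :
    f st = some s ∧ n = max st.cellCount s.cellCount := by
  unfold instr at h
  cases hf : f st with
  | none => rw [hf] at h; simp at h
  | some s' =>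
    rw [hf] at h
    simp only [Option.map_some, Option.some.injEq, Prod.mk.injEq] at h
    obtain ⟨rfl, rfl⟩ := h
    exact ⟨rfl, rfl⟩

lemma seqRun_spec {p q : Run} {st s : MState} {n : ℕ}
    (h : seqRun p q st = some (s, n)) :
    ∃ s₁ n₁ n₂, p st = some (s₁, n₁) ∧ q s₁ = some (s, n₂) ∧ n = max n₁ n₂ := by
  unfold seqRun at h
  simp only [Option.bind_eq_bind, Option.pure_def, Option.bind_eq_some_iff,
    Option.some.injEq, Prod.mk.injEq, Prod.exists] at h
  obtain ⟨s₁, n₁, hp, s₂, n₂, hq, heq1, heq2⟩ := h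
  subst heq1; subst heq2
  exact ⟨s₁, n₁, n₂, hp, hq, rfl⟩

lemma nopI_spec {st s : MState} (h : nopI st = some s) :
    rl s = rl st ∧ wl s = wl st := by
  unfold nopI at h; cases h; exact ⟨rfl, rfl⟩

lemma writeI_spec {b : Bool} {st s : MState} (h : writeI b st = some s) :
    rl s = rl st ∧ wl s = wl st := by
  unfold writeI at h
  cases hw : st.writeStack with
  | nil => rw [hw] at h; simp at h
  | cons w ws =>
    rw [hw] at h
    simp only [Option.ite_none_right_eq_some, Option.some.injEq] at h
    obtain ⟨-, rfl⟩ := h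
    simp [rl, wl, hw]

lemma copyI_spec {m : ℕ} {st s : MState} (h : copyI m st = some s) :
    rl s = rl st ∧ wl s = wl st := by
  unfold copyI at h
  cases hr : st.readStack with
  | nil => rw [hr] at h; simp at h
  | cons r rs =>
    cases hw : st.writeStack with
    | nil => rw [hr, hw] at h; simp at h
    | cons w ws =>
      rw [hr, hw] at h
      simp only [Option.ite_none_right_eq_some, Option.some.injEq] at h
      obtain ⟨hc, rfl⟩ := h
      refine ⟨by simp [rl, hr], ?_⟩
      simp only [wl, hw, List.map_cons, List.cons.injEq, List.length_append,
        List.length_take, List.length_drop, and_true, true_and]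
      omega

lemma skipI_spec {m : ℕ} {st s : MState} (h : skipI m st = some s) :
    rl s = rl st ∧ wl s = wl st := by
  unfold skipI at h
  cases hw : st.writeStack with
  | nil => rw [hw] at h; simp at h
  | cons w ws =>
    rw [hw] at h
    simp only [Option.ite_none_right_eq_some, Option.some.injEq] at h
    obtain ⟨-, rfl⟩ := h
    simp [rl, wl, hw]

lemma fwdI_spec {m : ℕ} {st s : MState} (h : fwdI m st = some s) :
    rl s = rl st ∧ wl s = wl st := by
  unfold fwdI at h
  cases hr : st.readStack with
  | nil => rw [hr] at h; simp at h
  | cons r rs =>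
    rw [hr] at h
    simp only [Option.ite_none_right_eq_some, Option.some.injEq] at h
    obtain ⟨-, rfl⟩ := h
    simp [rl, wl, hr]

lemma bwdI_spec {m : ℕ} {st s : MState} (h : bwdI m st = some s) :
    rl s = rl st ∧ wl s = wl st := by
  unfold bwdI at h
  cases hr : st.readStack with
  | nil => rw [hr] at h; simp at h
  | cons r rs =>
    rw [hr] at h
    simp only [Option.ite_none_right_eq_some, Option.some.injEq] at h
    obtain ⟨-, rfl⟩ := h
    simp [rl, wl, hr]

lemma newFrameI_spec {m : ℕ} {st s : MState} (h : newFrameI m st = some s) :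
    rl s = rl st ∧ wl s = m :: wl st := by
  unfold newFrameI at h; cases h; simp [rl, wl]

lemma moveFrameI_spec {st s : MState} (h : moveFrameI st = some s) :
    ∃ a l, wl st = a :: l ∧ rl s = a :: rl st ∧ wl s = l := by
  unfold moveFrameI at h
  cases hw : st.writeStack with
  | nil => rw [hw] at h; simp at h
  | cons w ws =>
    cases ws with
    | nil => rw [hw] at h; simp at h
    | cons w' ws' =>
      rw [hw] at h
      cases h
      exact ⟨w.cells.length, (w' :: ws').map fun f => f.cells.length,
        by simp [wl, hw], by simp [rl], by simp [wl, hw]⟩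

lemma dropFrameI_spec {st s : MState} (h : dropFrameI st = some s) :
    ∃ a, rl st = a :: rl s ∧ wl s = wl st := by
  unfold dropFrameI at h
  cases hr : st.readStack with
  | nil => rw [hr] at h; simp at h
  | cons r rs =>
    cases rs with
    | nil => rw [hr] at h; simp at h
    | cons r' rs' =>
      rw [hr] at h
      cases h
      exact ⟨r.cells.length, by simp [rl, hr], by simp [wl]⟩

lemma instr_pres_spec {f : MState → Option MState} {st s : MState} {n : ℕ}
    (h : instr f st = some (s, n))
    (hf : ∀ s', f st = some s' → rl s' = rl st ∧ wl s' = wl st) :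
    rl s = rl st ∧ wl s = wl st ∧ n = st.cellCount := by
  obtain ⟨h1, h2⟩ := instr_spec h
  obtain ⟨hr, hw⟩ := hf s h1
  have : s.cellCount = st.cellCount := by simp [cellCount_def, hr, hw]
  exact ⟨hr, hw, by omega⟩

lemma runCore_spec {A B : Ty} (t : Term A B) :
    ∀ (st s : MState) (n : ℕ), runCore t st = some (s, n) →
      rl s = rl st ∧ wl s = wl st ∧ n ≤ st.cellCount + extraCellBnd t := by
  induction t with
  | iden =>
    intro st s n h
    obtain ⟨hr, hw, hn⟩ := instr_pres_spec h (fun s' h' => copyI_spec h')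
    exact ⟨hr, hw, by simp [extraCellBnd]; omega⟩
  | comp sT tT ihs iht =>
    rename_i A B C
    intro st s n h
    rw [runCore] at h
    obtain ⟨s₁, n₁, m₁, h₁, h', hn⟩ := seqRun_spec h
    obtain ⟨s₂, n₂, m₂, h₂, h'', hm₁⟩ := seqRun_spec h'
    obtain ⟨s₃, n₃, m₃, h₃, h''', hm₂⟩ := seqRun_spec h''
    obtain ⟨s₄, n₄, n₅, h₄, h₅, hm₃⟩ := seqRun_spec h'''
    -- newFrame
    obtain ⟨hf₁, hn₁⟩ := instr_spec h₁
    obtain ⟨hr₁, hw₁⟩ := newFrameI_spec hf₁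
    -- runCore sT
    obtain ⟨hr₂, hw₂, hn₂⟩ := ihs s₁ s₂ n₂ h₂
    -- moveFrame
    obtain ⟨hf₃, hn₃⟩ := instr_spec h₃
    obtain ⟨a, l, hwl, hr₃, hw₃⟩ := moveFrameI_spec hf₃
    -- runCore tT
    obtain ⟨hr₄, hw₄, hn₄⟩ := iht s₃ s₄ n₄ h₄
    -- dropFrame
    obtain ⟨hf₅, hn₅⟩ := instr_spec h₅
    obtain ⟨b, hrl, hw₅⟩ := dropFrameI_spec hf₅
    -- compute
    rw [hw₂, hw₁] at hwl
    injection hwl with ha hl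
    subst ha; subst hl
    have c₁ : s₁.cellCount = st.cellCount + B.bitSize := by
      simp [cellCount_def, hr₁, hw₁]; omega
    have c₂ : s₂.cellCount = s₁.cellCount := by
      simp [cellCount_def, hr₂, hw₂]
    have c₃ : s₃.cellCount = s₂.cellCount := by
      simp [cellCount_def, hr₃, hw₃, hr₂, hw₂, hw₁, hr₁, cellCount_def]; omega
    have c₄ : s₄.cellCount = s₃.cellCount := by
      simp [cellCount_def, hr₄, hw₄]
    rw [hr₄, hr₃] at hrl
    injection hrl with hb hrl'
    have c₅ : s.cellCount = st.cellCount := by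
      simp [cellCount_def, ← hrl', hw₅, hw₄, hw₃, hr₂, hr₁]
    refine ⟨by rw [← hrl', hr₂, hr₁], by rw [hw₅, hw₄, hw₃], ?_⟩
    simp only [extraCellBnd]
    omega
  | unit =>
    intro st s n h
    obtain ⟨hr, hw, hn⟩ := instr_pres_spec h (fun s' h' => nopI_spec h')
    exact ⟨hr, hw, by simp [extraCellBnd]; omega⟩
  | injl tT ih =>
    intro st s n h
    rw [runCore] at h
    obtain ⟨s₁, n₁, m₁, h₁, h', hn⟩ := seqRun_spec h
    obtain ⟨s₂, n₂, n₃, h₂, h₃, hm⟩ := seqRun_spec h'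
    obtain ⟨hr₁, hw₁, hn₁⟩ := instr_pres_spec h₁ (fun s' h' => writeI_spec h')
    obtain ⟨hr₂, hw₂, hn₂⟩ := instr_pres_spec h₂ (fun s' h' => skipI_spec h')
    obtain ⟨hr₃, hw₃, hn₃⟩ := ih s₂ s n₃ h₃
    have c₁ : s₁.cellCount = st.cellCount := by simp [cellCount_def, hr₁, hw₁]
    have c₂ : s₂.cellCount = s₁.cellCount := by simp [cellCount_def, hr₂, hw₂]
    refine ⟨by rw [hr₃, hr₂, hr₁], by rw [hw₃, hw₂, hw₁], ?_⟩
    simp only [extraCellBnd]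
    omega
  | injr tT ih =>
    intro st s n h
    rw [runCore] at h
    obtain ⟨s₁, n₁, m₁, h₁, h', hn⟩ := seqRun_spec h
    obtain ⟨s₂, n₂, n₃, h₂, h₃, hm⟩ := seqRun_spec h'
    obtain ⟨hr₁, hw₁, hn₁⟩ := instr_pres_spec h₁ (fun s' h' => writeI_spec h')
    obtain ⟨hr₂, hw₂, hn₂⟩ := instr_pres_spec h₂ (fun s' h' => skipI_spec h')
    obtain ⟨hr₃, hw₃, hn₃⟩ := ih s₂ s n₃ h₃
    have c₁ : s₁.cellCount = st.cellCount := by simp [cellCount_def, hr₁, hw₁]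
    have c₂ : s₂.cellCount = s₁.cellCount := by simp [cellCount_def, hr₂, hw₂]
    refine ⟨by rw [hr₃, hr₂, hr₁], by rw [hw₃, hw₂, hw₁], ?_⟩
    simp only [extraCellBnd]
    omega
  | case sT tT ihs iht =>
    intro st s n h
    rw [runCore] at h
    have key : ∀ (m : ℕ) {X Y : Ty} (u : Term X Y)
        (ihu : ∀ (st s : MState) (n : ℕ), runCore u st = some (s, n) →
          rl s = rl st ∧ wl s = wl st ∧ n ≤ st.cellCount + extraCellBnd u),
        seqRun (instr (fwdI m)) (seqRun (runCore u) (instr (bwdI m))) st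
          = some (s, n) →
        rl s = rl st ∧ wl s = wl st ∧ n ≤ st.cellCount + extraCellBnd u := by
      intro m X Y u ihu h
      obtain ⟨s₁, n₁, m₁, h₁, h', hn⟩ := seqRun_spec h
      obtain ⟨s₂, n₂, n₃, h₂, h₃, hm⟩ := seqRun_spec h'
      obtain ⟨hr₁, hw₁, hn₁⟩ := instr_pres_spec h₁ (fun s' h' => fwdI_spec h')
      obtain ⟨hr₂, hw₂, hn₂⟩ := ihu s₁ s₂ n₂ h₂
      obtain ⟨hr₃, hw₃, hn₃⟩ := instr_pres_spec h₃ (fun s' h' => bwdI_spec h')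
      have c₁ : s₁.cellCount = st.cellCount := by simp [cellCount_def, hr₁, hw₁]
      have c₂ : s₂.cellCount = s₁.cellCount := by simp [cellCount_def, hr₂, hw₂]
      refine ⟨by rw [hr₃, hr₂, hr₁], by rw [hw₃, hw₂, hw₁], ?_⟩
      omega
    simp only at h
    cases hread : readI st with
    | none => rw [hread] at h; simp at h
    | some b =>
      rw [hread] at h
      cases b with
      | false =>
        obtain ⟨hr, hw, hn⟩ := key _ sT ihs h
        exact ⟨hr, hw, by simp only [extraCellBnd]; omega⟩
      | true =>
        obtain ⟨hr, hw, hn⟩ := key _ tT iht h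
        exact ⟨hr, hw, by simp only [extraCellBnd]; omega⟩
  | pair sT tT ihs iht =>
    intro st s n h
    rw [runCore] at h
    obtain ⟨s₁, n₁, n₂, h₁, h₂, hn⟩ := seqRun_spec h
    obtain ⟨hr₁, hw₁, hn₁⟩ := ihs st s₁ n₁ h₁
    obtain ⟨hr₂, hw₂, hn₂⟩ := iht s₁ s n₂ h₂
    have c₁ : s₁.cellCount = st.cellCount := by simp [cellCount_def, hr₁, hw₁]
    refine ⟨by rw [hr₂, hr₁], by rw [hw₂, hw₁], ?_⟩
    simp only [extraCellBnd]
    omega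
  | take tT ih =>
    intro st s n h
    rw [runCore] at h
    obtain ⟨hr, hw, hn⟩ := ih st s n h
    exact ⟨hr, hw, by simpa [extraCellBnd] using hn⟩
  | drop tT ih =>
    intro st s n h
    rw [runCore] at h
    obtain ⟨s₁, n₁, m₁, h₁, h', hn⟩ := seqRun_spec h
    obtain ⟨s₂, n₂, n₃, h₂, h₃, hm⟩ := seqRun_spec h'
    obtain ⟨hr₁, hw₁, hn₁⟩ := instr_pres_spec h₁ (fun s' h' => fwdI_spec h')
    obtain ⟨hr₂, hw₂, hn₂⟩ := ih s₁ s₂ n₂ h₂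
    obtain ⟨hr₃, hw₃, hn₃⟩ := instr_pres_spec h₃ (fun s' h' => bwdI_spec h')
    have c₁ : s₁.cellCount = st.cellCount := by simp [cellCount_def, hr₁, hw₁]
    have c₂ : s₂.cellCount = s₁.cellCount := by simp [cellCount_def, hr₂, hw₂]
    refine ⟨by rw [hr₃, hr₂, hr₁], by rw [hw₃, hw₂, hw₁], ?_⟩
    simp only [extraCellBnd]
    omega

lemma bitSize_le_max_left (a b : Ty) : a.bitSize ≤ max a.bitSize b.bitSize :=
  le_max_left _ _

lemma encode_length : ∀ (A : Ty) (v : A.interp), (A.encode v).length = A.bitSize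
  | .unit, _ => rfl
  | .sum a b, Sum.inl x => by
      have := encode_length a x
      have h1 : a.bitSize ≤ max a.bitSize b.bitSize := le_max_left _ _
      simp only [Ty.encode, List.length_append, List.length_cons,
        List.length_replicate, Ty.bitSize, padl, this]
      omega
  | .sum a b, Sum.inr y => by
      have := encode_length b y
      have h1 : b.bitSize ≤ max a.bitSize b.bitSize := le_max_right _ _
      simp only [Ty.encode, List.length_append, List.length_cons,
        List.length_replicate, Ty.bitSize, padr, this]
      omega
  | .prod a b, v => by
      simp [Ty.encode, Ty.bitSize, encode_length a v.1, encode_length b v.2]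

theorem runCore_cell_bound (A B : Ty) (t : Term A B) (v : A.interp)
    (s : MState) (n : ℕ) (h : runCore t (initState A B v) = some (s, n)) :
    n ≤ cellBnd t := by
  obtain ⟨-, -, hn⟩ := runCore_spec t _ s n h
  have hc : (initState A B v).cellCount = A.bitSize + B.bitSize := by
    simp [cellCount_def, rl, wl, initState, encode_length]
  rw [hc] at hn
  simpa [cellBnd] using hn
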